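/- arXiv:2103.02062 — 2 statements merged into one kernel-verified Lean document; each statement's English description precedes it below -/
import Mathlib

section
/- Let p ≥ 2 be an integer, p̄ = ⌊p/2⌋, and δ > 0. Define f : ℝ^p → ℝ by f(θ) = (1/(2p̄)) [ (δ/2 − (δ/2)θ_1)² + ∑_{i=2}^{p̄} ((δ/2)θ_{i−1} − (δ/2)θ_i)² + p̄ · (δ/2 − (δ/2)θ_{p̄+1} − ⋯ − (δ/2)θ_p)² ]. Then for every θ ∈ ℝ^p with θ_{p̄} = 0, ‖∇f(θ)‖ ≥ δ² / (4 p̄^{5/2}). -/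
/-!
Test the gradient against the direction `v = (1, 2, …, p̄, 0, …, 0)`. Moving `θ` along `v` shifts
every residual of the first group by `-(δ/2) t` and leaves the last group unchanged, so the
derivative of `f` along `v` is `-δ/(2p̄)` times the telescoping sum
`(δ/2 - (δ/2)θ₁) + ∑ᵢ (δ/2)(θᵢ₋₁ - θᵢ) = δ/2 - (δ/2)θ_p̄ = δ/2`, that is `-δ²/(4p̄)`.
Since `‖v‖² = ∑_{k ≤ p̄} k² ≤ p̄³`, Cauchy–Schwarz gives `‖∇f(θ)‖ ≥ δ²/(4p̄ · p̄^{3/2})`.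
-/

open Finset

theorem sum_Icc_two_sub {M : Type*} [AddCommGroup M] (x : ℕ → M) {n : ℕ} (hn : 1 ≤ n) :
    ∑ i ∈ Icc 2 n, (x (i - 2) - x (i - 1)) = x 0 - x (n - 1) := by
  rw [← Ico_add_one_right_eq_Icc, sum_Ico_eq_sum_range, ← sum_range_sub' x (n - 1)]
  refine sum_congr (by rw [show n + 1 - 2 = n - 1 by omega]) fun i _ => ?_
  congr 2 <;> omega

theorem hasDerivAt_add_mul_sq (a b : ℝ) :
    HasDerivAt (fun t : ℝ => (a + t * b) ^ 2) (2 * a * b) 0 := by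
  refine ((((hasDerivAt_id (0 : ℝ)).mul_const b).const_add a).fun_pow 2).congr_deriv ?_
  simp

theorem div_le_norm_of_le_abs_inner {E : Type*} [NormedAddCommGroup E] [InnerProductSpace ℝ E]
    {u v : E} {c M : ℝ} (hc : c ≤ |inner ℝ u v|) (hv : ‖v‖ ≤ M) (hM : 0 < M) : c / M ≤ ‖u‖ := by
  rw [div_le_iff₀ hM]
  calc c ≤ |inner ℝ u v| := hc
    _ ≤ ‖u‖ * ‖v‖ := abs_real_inner_le_norm u v
    _ ≤ ‖u‖ * M := by gcongr

/-- Reading coordinates through `coordOrZero` frees the indices of `f` from their bound proofs, so its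
sums become plain `Finset` sums of continuous linear functionals. -/
noncomputable def coordOrZero (p k : ℕ) : StrongDual ℝ (EuclideanSpace ℝ (Fin p)) :=
  if h : k < p then EuclideanSpace.proj ⟨k, h⟩ else 0

theorem apply_eq_coordOrZero {p k : ℕ} (h : k < p) (θ : EuclideanSpace ℝ (Fin p)) :
    θ ⟨k, h⟩ = coordOrZero p k θ := by
  simp [coordOrZero, h]

noncomputable def arLoss (p pbar : ℕ) (δ : ℝ) (θ : EuclideanSpace ℝ (Fin p)) : ℝ :=
  1 / (2 * (pbar : ℝ)) *
    ((δ / 2 - δ / 2 * coordOrZero p 0 θ) ^ 2 +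
      ∑ i ∈ Icc 2 pbar, (δ / 2 * coordOrZero p (i - 2) θ - δ / 2 * coordOrZero p (i - 1) θ) ^ 2 +
      (pbar : ℝ) * (δ / 2 - ∑ i ∈ Icc (pbar + 1) p, δ / 2 * coordOrZero p (i - 1) θ) ^ 2)

theorem differentiable_arLoss (p pbar : ℕ) (δ : ℝ) : Differentiable ℝ (arLoss p pbar δ) := by
  unfold arLoss
  fun_prop

noncomputable def rampDir (p pbar : ℕ) : EuclideanSpace ℝ (Fin p) :=
  WithLp.toLp 2 fun j => if (j : ℕ) < pbar then (j : ℝ) + 1 else 0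

theorem coordOrZero_rampDir {p pbar : ℕ} (h : pbar ≤ p) (k : ℕ) :
    coordOrZero p k (rampDir p pbar) = if k < pbar then (k : ℝ) + 1 else 0 := by
  by_cases hk : k < p
  · simp [coordOrZero, rampDir, hk]
  · simp [coordOrZero, hk, show ¬ k < pbar by omega]

theorem norm_rampDir_sq_le {p pbar : ℕ} (h : pbar ≤ p) :
    ‖rampDir p pbar‖ ^ 2 ≤ (pbar : ℝ) ^ 3 := by
  rw [EuclideanSpace.norm_sq_eq]
  simp only [rampDir, Real.norm_eq_abs, sq_abs]
  rw [Fin.sum_univ_eq_sum_range (fun k => (if k < pbar then (k : ℝ) + 1 else 0) ^ 2),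
    ← sum_subset (range_subset_range.2 h) fun k _ hk => by simp_all]
  calc ∑ k ∈ range pbar, (if k < pbar then (k : ℝ) + 1 else 0) ^ 2
      ≤ #(range pbar) • (pbar : ℝ) ^ 2 := sum_le_card_nsmul _ _ _ fun k hk => by
        rw [if_pos (mem_range.1 hk)]
        gcongr
        exact_mod_cast mem_range.1 hk
    _ = (pbar : ℝ) ^ 3 := by rw [card_range, nsmul_eq_mul]; ring

theorem norm_rampDir_le {p pbar : ℕ} (h : pbar ≤ p) :
    ‖rampDir p pbar‖ ≤ (pbar : ℝ) ^ ((3 : ℝ) / 2) := by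
  rw [show (pbar : ℝ) ^ ((3 : ℝ) / 2) = √((pbar : ℝ) ^ 3) by
    rw [Real.sqrt_eq_rpow, ← Real.rpow_natCast, ← Real.rpow_mul (by positivity)]; norm_num]
  exact Real.le_sqrt_of_sq_le (norm_rampDir_sq_le h)

theorem hasLineDerivAt_arLoss_rampDir {p pbar : ℕ} (hpbar_pos : 1 ≤ pbar) (hpbar_le : pbar ≤ p)
    (δ : ℝ)
    {θ : EuclideanSpace ℝ (Fin p)} (hθ : coordOrZero p (pbar - 1) θ = 0) :
    HasLineDerivAt ℝ (arLoss p pbar δ) (-(δ ^ 2 / (4 * pbar))) θ (rampDir p pbar) := by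
  set x : ℕ → ℝ := fun k => δ / 2 * coordOrZero p k θ
  set C := (pbar : ℝ) * (δ / 2 - ∑ i ∈ Icc (pbar + 1) p, x (i - 1)) ^ 2
  have hline : (fun t : ℝ => arLoss p pbar δ (θ + t • rampDir p pbar)) = fun t =>
      1 / (2 * (pbar : ℝ)) * ((δ / 2 - x 0 + t * -(δ / 2)) ^ 2 +
        ∑ i ∈ Icc 2 pbar, (x (i - 2) - x (i - 1) + t * -(δ / 2)) ^ 2 + C) := by
    funext t
    simp only [arLoss, map_add, map_smul, smul_eq_mul, coordOrZero_rampDir hpbar_le]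
    rw [if_pos (by omega)]
    congr 2
    · congr 1
      · simp only [x]
        push_cast
        ring
      · refine sum_congr rfl fun i hi => ?_
        obtain ⟨hi2, hip⟩ := mem_Icc.1 hi
        rw [if_pos (by omega), if_pos (by omega), Nat.cast_sub (by omega : 2 ≤ i),
          Nat.cast_sub (by omega : 1 ≤ i)]
        ring
    · simp only [C]
      congr 3
      refine sum_congr rfl fun i hi => ?_
      rw [if_neg (by have := (mem_Icc.1 hi).1; omega)]
      ring
  unfold HasLineDerivAt
  rw [hline]
  refine ((((hasDerivAt_add_mul_sq _ _).add
    (HasDerivAt.fun_sum (A := fun i t => (x (i - 2) - x (i - 1) + t * -(δ / 2)) ^ 2)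
      fun i _ => hasDerivAt_add_mul_sq _ _)).add_const C).const_mul
      (1 / (2 * (pbar : ℝ)))).congr_deriv ?_
  rw [← sum_mul, ← mul_sum, sum_Icc_two_sub x hpbar_pos]
  simp only [x, hθ]
  field_simp
  ring

/-- Lower bound on the gradient norm of the total loss
`f(θ) = (1/(2p̄)) [ (δ/2 − (δ/2)θ₁)² + ∑_{i=2}^{p̄} ((δ/2)θ_{i−1} − (δ/2)θ_i)²
        + p̄ (δ/2 − (δ/2)θ_{p̄+1} − ⋯ − (δ/2)θ_p)² ]`
at any point whose `p̄`-th coordinate vanishes (1-indexed; `p̄ = ⌊p/2⌋`). -/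
theorem grad_lower_bound_f
    {p : ℕ} (hp : 2 ≤ p) (pbar : ℕ) (hpbar : pbar = p / 2)
    (δ : ℝ)
    (f : EuclideanSpace ℝ (Fin p) → ℝ)
    (hf : ∀ θ : EuclideanSpace ℝ (Fin p),
        f θ = (1 / (2 * (pbar : ℝ))) *
          ((δ / 2 - δ / 2 * θ ⟨0, by omega⟩) ^ 2 +
            (∑ i ∈ (Finset.Icc 2 pbar).attach,
              (δ / 2 * θ ⟨i.1 - 2, by have := (Finset.mem_Icc.mp i.2).2; omega⟩
                - δ / 2 * θ ⟨i.1 - 1, by have := (Finset.mem_Icc.mp i.2).2; omega⟩) ^ 2) +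
            (pbar : ℝ) *
              (δ / 2 - ∑ i ∈ (Finset.Icc (pbar + 1) p).attach,
                δ / 2 * θ ⟨i.1 - 1, by have h1 := (Finset.mem_Icc.mp i.2).2; have h2 := (Finset.mem_Icc.mp i.2).1; omega⟩) ^ 2)) :
    ∀ θ : EuclideanSpace ℝ (Fin p), θ ⟨pbar - 1, by omega⟩ = 0 →
      ‖gradient f θ‖ ≥ δ ^ 2 / (4 * (pbar : ℝ) ^ ((5 : ℝ) / 2)) := by
  intro θ hθ
  have hpbar_pos : 1 ≤ pbar := by omega
  have hpbar_le : pbar ≤ p := by omega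
  have hf_eq : f = arLoss p pbar δ := funext fun θ => by
    rw [hf]
    simp only [apply_eq_coordOrZero]
    rw [arLoss, ← sum_attach (Icc 2 pbar), ← sum_attach (Icc (pbar + 1) p)]
  have hθ' : coordOrZero p (pbar - 1) θ = 0 := by rwa [apply_eq_coordOrZero] at hθ
  have hinner : inner ℝ (gradient f θ) (rampDir p pbar) = -(δ ^ 2 / (4 * pbar)) := by
    rw [hf_eq, inner_gradient_left, ← (differentiable_arLoss p pbar δ θ).lineDeriv_eq_fderiv,
      (hasLineDerivAt_arLoss_rampDir hpbar_pos hpbar_le δ hθ').lineDeriv]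
  have hsplit : (pbar : ℝ) ^ ((5 : ℝ) / 2) = pbar * (pbar : ℝ) ^ ((3 : ℝ) / 2) := by
    rw [show (5 : ℝ) / 2 = 1 + 3 / 2 by norm_num, Real.rpow_add (by positivity), Real.rpow_one]
  calc δ ^ 2 / (4 * (pbar : ℝ) ^ ((5 : ℝ) / 2))
      = δ ^ 2 / (4 * pbar) / (pbar : ℝ) ^ ((3 : ℝ) / 2) := by rw [hsplit, div_div, mul_assoc]
    _ ≤ ‖gradient f θ‖ := div_le_norm_of_le_abs_inner
      (by rw [hinner, abs_neg, abs_of_nonneg (by positivity)]) (norm_rampDir_le hpbar_le)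
      (by positivity)
end

section
/- Let (Ω, F, P) be a probability space with a filtration (F_j)_{j≥0}, let p̄ ≥ 1 be a real number, and let q^{(0)}, …, q^{(t−1)} be {0,1}-valued random variables such that q^{(j)} is F_{j+1}-measurable and P[q^{(j)} = 1 | F_j] ≤ 1/p̄ almost surely for every j. Then P[ ∑_{j=0}^{t−1} q^{(j)} ≥ p̄ ] ≤ exp( (e−1)t/p̄ − p̄ ). Consequently, for every ω ∈ (0,1), if t ≤ (p̄² + p̄ log ω)/(e−1) then P[ ∑_{j=0}^{t−1} q^{(j)} ≥ p̄ ] ≤ ω. -/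
/-!
Write `S n = ∑_{j<n} q j`. On `[0, 1]` convexity gives `exp x ≤ 1 + (e - 1) x`; since
`exp (S n)` is `F n`-measurable it can be pulled out of the conditional expectation given `F n`, so
`E[exp (S (n+1))] ≤ (1 + (e - 1) / p̄) E[exp (S n)] ≤ exp ((e - 1) / p̄) E[exp (S n)]`.
Iterating and applying Chernoff's inequality at level `p̄` gives the tail bound; the second claim
is the first one with the exponent bounded by `log ω₀`.
-/

open MeasureTheory ProbabilityTheory Real Finset

theorem Real.exp_le_one_add_mul_of_mem_Icc {x : ℝ} (hx : x ∈ Set.Icc (0 : ℝ) 1) :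
    exp x ≤ 1 + (exp 1 - 1) * x := by
  have := convexOn_exp.2 (Set.mem_univ 0) (Set.mem_univ 1) (sub_nonneg.2 hx.2) hx.1
    (sub_add_cancel 1 x)
  simp only [smul_eq_mul, mul_zero, mul_one, zero_add, exp_zero] at this
  linarith

theorem Set.indicator_setOf_eq_one_eq_self {α : Type*} {f : α → ℝ}
    (hf : ∀ x, f x = 0 ∨ f x = 1) : {x | f x = 1}.indicator (fun _ => 1) = f := by
  funext x
  rcases hf x with h | h <;> simp [Set.indicator, h]

theorem MeasureTheory.integral_mul_le_of_condExp_le {Ω : Type*} {m m0 : MeasurableSpace Ω}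
    {μ : Measure Ω} (hm : m ≤ m0) [SigmaFinite (μ.trim hm)] {X Y : Ω → ℝ} {c : ℝ}
    (hX : StronglyMeasurable[m] X) (hX0 : 0 ≤ X) (hXint : Integrable X μ)
    (hXY : Integrable (X * Y) μ) (hY : Integrable Y μ) (hc : ∀ᵐ ω ∂μ, μ[Y | m] ω ≤ c) :
    ∫ ω, X ω * Y ω ∂μ ≤ c * ∫ ω, X ω ∂μ := calc
  ∫ ω, (X * Y) ω ∂μ = ∫ ω, μ[X * Y | m] ω ∂μ := (integral_condExp hm).symm
  _ ≤ ∫ ω, X ω * c ∂μ := by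
    refine integral_mono_ae integrable_condExp (hXint.mul_const c) ?_
    filter_upwards [condExp_mul_of_stronglyMeasurable_left hX hXY hY, hc] with ω hpull hω
    rw [hpull]
    exact mul_le_mul_of_nonneg_left hω (hX0 ω)
  _ = c * ∫ ω, X ω ∂μ := by rw [integral_mul_const, mul_comm]

section AdaptedIncrements

variable {Ω : Type*} {m0 : MeasurableSpace Ω} {P : Measure Ω} {F : Filtration ℕ m0}
  {q : ℕ → Ω → ℝ}

theorem sum_range_mem_Icc (hq : ∀ j ω, q j ω ∈ Set.Icc (0 : ℝ) 1) (n : ℕ) (ω : Ω) :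
    ∑ j ∈ range n, q j ω ∈ Set.Icc (0 : ℝ) n :=
  ⟨sum_nonneg fun j _ => (hq j ω).1,
    by simpa using sum_le_sum fun j (_ : j ∈ range n) => (hq j ω).2⟩

theorem measurable_sum_range_of_measurable_succ
    (hadapted : ∀ j, Measurable[F (j + 1)] (q j)) (n : ℕ) :
    Measurable[F n] (fun ω => ∑ j ∈ range n, q j ω) :=
  Finset.measurable_sum _ fun j hj => (hadapted j).mono (F.mono (mem_range.1 hj)) le_rfl

section FiniteMeasure

variable [IsFiniteMeasure P]

theorem integrable_exp_sum_range (hq : ∀ j ω, q j ω ∈ Set.Icc (0 : ℝ) 1)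
    (hadapted : ∀ j, Measurable[F (j + 1)] (q j)) (n : ℕ) :
    Integrable (fun ω => exp (∑ j ∈ range n, q j ω)) P :=
  .of_mem_Icc 0 (exp n)
    ((measurable_sum_range_of_measurable_succ hadapted n).exp.mono (F.le n) le_rfl).aemeasurable
    (.of_forall fun ω => ⟨(exp_pos _).le, exp_le_exp.2 (sum_range_mem_Icc hq n ω).2⟩)

theorem integral_exp_sum_range_succ_le (hq : ∀ j ω, q j ω ∈ Set.Icc (0 : ℝ) 1)
    (hadapted : ∀ j, Measurable[F (j + 1)] (q j)) {r : ℝ} {n : ℕ}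
    (hcond : ∀ᵐ ω ∂P, P[q n | F n] ω ≤ r) :
    ∫ ω, exp (∑ j ∈ range (n + 1), q j ω) ∂P
      ≤ (1 + (exp 1 - 1) * r) * ∫ ω, exp (∑ j ∈ range n, q j ω) ∂P := by
  set X : Ω → ℝ := fun ω => exp (∑ j ∈ range n, q j ω)
  have hXint : Integrable X P := integrable_exp_sum_range hq hadapted n
  have hqm : Measurable (q n) := (hadapted n).mono (F.le _) le_rfl
  have hqint : Integrable (q n) P := .of_mem_Icc 0 1 hqm.aemeasurable (.of_forall (hq n))
  have hXqint : Integrable (fun ω => X ω * q n ω) P :=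
    hXint.mul_bdd hqm.aestronglyMeasurable <| .of_forall fun ω =>
      (norm_of_nonneg (hq n ω).1).trans_le (hq n ω).2
  have hcross : ∫ ω, X ω * q n ω ∂P ≤ r * ∫ ω, X ω ∂P :=
    integral_mul_le_of_condExp_le (F.le n)
      (measurable_sum_range_of_measurable_succ hadapted n).exp.stronglyMeasurable
      (fun ω => (exp_pos _).le) hXint hXqint hqint hcond
  calc ∫ ω, exp (∑ j ∈ range (n + 1), q j ω) ∂P
      ≤ ∫ ω, X ω + (exp 1 - 1) * (X ω * q n ω) ∂P := by
        refine integral_mono_of_nonneg (.of_forall fun ω => (exp_pos _).le)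
          (hXint.add (hXqint.const_mul _)) (.of_forall fun ω => ?_)
        simp only [sum_range_succ, exp_add, X]
        nlinarith [exp_le_one_add_mul_of_mem_Icc (hq n ω), exp_pos (∑ j ∈ range n, q j ω)]
    _ = ∫ ω, X ω ∂P + (exp 1 - 1) * ∫ ω, X ω * q n ω ∂P := by
        rw [integral_add hXint (hXqint.const_mul _), integral_const_mul]
    _ ≤ ∫ ω, X ω ∂P + (exp 1 - 1) * (r * ∫ ω, X ω ∂P) := by
        gcongr
        exact sub_nonneg.2 (one_le_exp zero_le_one)
    _ = (1 + (exp 1 - 1) * r) * ∫ ω, X ω ∂P := by ring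

end FiniteMeasure

variable [IsProbabilityMeasure P]

theorem integral_exp_sum_range_le (hq : ∀ j ω, q j ω ∈ Set.Icc (0 : ℝ) 1)
    (hadapted : ∀ j, Measurable[F (j + 1)] (q j)) {r : ℝ} (hr : 0 ≤ r) {t : ℕ}
    (hcond : ∀ j < t, ∀ᵐ ω ∂P, P[q j | F j] ω ≤ r) :
    ∫ ω, exp (∑ j ∈ range t, q j ω) ∂P ≤ exp ((exp 1 - 1) * r * t) := by
  have hmul : 0 ≤ (exp 1 - 1) * r := mul_nonneg (sub_nonneg.2 (one_le_exp zero_le_one)) hr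
  have hpow : ∀ n ≤ t, ∫ ω, exp (∑ j ∈ range n, q j ω) ∂P ≤ (1 + (exp 1 - 1) * r) ^ n := by
    intro n hn
    induction n with
    | zero => simp
    | succ n ih =>
      calc _ ≤ (1 + (exp 1 - 1) * r) * ∫ ω, exp (∑ j ∈ range n, q j ω) ∂P :=
            integral_exp_sum_range_succ_le hq hadapted (hcond n hn)
        _ ≤ (1 + (exp 1 - 1) * r) * (1 + (exp 1 - 1) * r) ^ n := by
            gcongr; exact ih (by omega)
        _ = (1 + (exp 1 - 1) * r) ^ (n + 1) := (pow_succ' _ _).symm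
  calc _ ≤ (1 + (exp 1 - 1) * r) ^ t := hpow t le_rfl
    _ ≤ exp ((exp 1 - 1) * r) ^ t := by
        gcongr; linarith [add_one_le_exp ((exp 1 - 1) * r)]
    _ = exp ((exp 1 - 1) * r * t) := by rw [← exp_nat_mul, mul_comm]

theorem measure_sum_range_ge_le (hq : ∀ j ω, q j ω ∈ Set.Icc (0 : ℝ) 1)
    (hadapted : ∀ j, Measurable[F (j + 1)] (q j)) {r : ℝ} (hr : 0 ≤ r) {t : ℕ}
    (hcond : ∀ j < t, ∀ᵐ ω ∂P, P[q j | F j] ω ≤ r) (a : ℝ) :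
    P {ω | a ≤ ∑ j ∈ range t, q j ω} ≤ ENNReal.ofReal (exp ((exp 1 - 1) * r * t - a)) := by
  have hint := integrable_exp_sum_range (P := P) hq hadapted t
  have hchernoff := measure_ge_le_exp_mul_mgf (X := fun ω => ∑ j ∈ range t, q j ω) a
    zero_le_one (by simpa only [one_mul] using hint)
  rw [← ofReal_measureReal]
  refine ENNReal.ofReal_le_ofReal (hchernoff.trans ?_)
  calc exp (-1 * a) * mgf (fun ω => ∑ j ∈ range t, q j ω) P 1
      ≤ exp (-a) * exp ((exp 1 - 1) * r * t) := by
        simp only [mgf, one_mul, neg_one_mul]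
        gcongr
        exact integral_exp_sum_range_le hq hadapted hr hcond
    _ = exp ((exp 1 - 1) * r * t - a) := by rw [← exp_add]; ring_nf

end AdaptedIncrements

/-- Chernoff tail bound: under the same assumptions as the MGF bound,
`P[∑_{j<t} q⁽ʲ⁾ ≥ p̄] ≤ exp((e−1)t/p̄ − p̄)`; consequently for `ω₀ ∈ (0,1)`,
if `t ≤ (p̄² + p̄ log ω₀)/(e−1)` then this probability is at most `ω₀`. -/
theorem chernoff_tail_adapted_bernoulli
    {Ω : Type*} {m0 : MeasurableSpace Ω} (P : Measure Ω) [IsProbabilityMeasure P]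
    (F : Filtration ℕ m0) (pbar : ℝ) (hpbar : 1 ≤ pbar) (t : ℕ)
    (q : ℕ → Ω → ℝ)
    (h01 : ∀ j, ∀ ω, q j ω = 0 ∨ q j ω = 1)
    (hadapted : ∀ j, Measurable[F (j + 1)] (q j))
    (hcond : ∀ j < t,
      ∀ᵐ ω ∂P,
        (P[Set.indicator {ω' | q j ω' = 1} (fun _ => (1 : ℝ)) | F j]) ω ≤ 1 / pbar) :
    P {ω | pbar ≤ ∑ j ∈ Finset.range t, q j ω}
        ≤ ENNReal.ofReal (Real.exp ((Real.exp 1 - 1) * t / pbar - pbar)) ∧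
    ∀ ω₀ : ℝ, 0 < ω₀ → ω₀ < 1 →
      (t : ℝ) ≤ (pbar ^ 2 + pbar * Real.log ω₀) / (Real.exp 1 - 1) →
      P {ω | pbar ≤ ∑ j ∈ Finset.range t, q j ω} ≤ ENNReal.ofReal ω₀ := by
  have hpbar0 : 0 < pbar := zero_lt_one.trans_le hpbar
  have hq : ∀ j ω, q j ω ∈ Set.Icc (0 : ℝ) 1 := fun j ω => by
    rcases h01 j ω with h | h <;> simp [h]
  have hcond' : ∀ j < t, ∀ᵐ ω ∂P, P[q j | F j] ω ≤ 1 / pbar := fun j hj => by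
    simpa only [Set.indicator_setOf_eq_one_eq_self (h01 j)] using hcond j hj
  have htail : P {ω | pbar ≤ ∑ j ∈ Finset.range t, q j ω}
      ≤ ENNReal.ofReal (exp ((exp 1 - 1) * t / pbar - pbar)) := by
    simpa only [mul_one_div, div_mul_eq_mul_div] using
      measure_sum_range_ge_le hq hadapted (one_div_nonneg.2 hpbar0.le) hcond' pbar
  refine ⟨htail, fun ω₀ hω₀ _ ht => htail.trans (ENNReal.ofReal_le_ofReal ?_)⟩
  have he1 : 0 < exp 1 - 1 := sub_pos.2 (one_lt_exp_iff.2 zero_lt_one)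
  have hexponent : (exp 1 - 1) * t / pbar - pbar ≤ log ω₀ := by
    rw [le_div_iff₀ he1] at ht
    rw [sub_le_iff_le_add, div_le_iff₀ hpbar0]
    nlinarith
  calc exp ((exp 1 - 1) * t / pbar - pbar) ≤ exp (log ω₀) := exp_le_exp.2 hexponent
    _ = ω₀ := exp_log hω₀
end
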